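/- Every monomial t^n·x^m (n, m ≥ 0) lies in the linear span of the products {P_{i,k}(t)·H_k(x,t) : i ≥ 0, 0 ≤ k ≤ m}, where for each k, {P_{i,k}}_{i≥0} is any basis of polynomials in t whose span contains all polynomials in t. Consequently the products P_{i,k}(t)H_k(x,t) span all polynomials in (x,t). -/

import Mathlib

/-- The 2D Hermite polynomials, satisfying
`x·H_k(x,t) = (k+1)H_{k+1}(x,t) + t·H_{k−1}(x,t)`, `H_0 = 1`, `H_1(x,t) = x`. -/
noncomputable def hermite2D : ℕ → ℝ → ℝ → ℝ
  | 0, _, _ => 1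
  | 1, x, _ => x
  | n + 2, x, t => (x * hermite2D (n + 1) x t - t * hermite2D n x t) / ((n : ℝ) + 2)

/-!
Multiplying by `x` raises the Hermite degree by at most one: `x·H_0 = H_1` and
`x·H_{k+1} = (k+2)H_{k+2} + t·H_k`. Hence, by induction on `m`, `t^n x^m` is a combination of
the products `t^j H_k(x,t)` with `k ≤ m`, and each `t^j` in turn is a combination of the
`P_{i,k}(t)`.
-/

theorem mul_hermite2D_zero (x t : ℝ) : x * hermite2D 0 x t = hermite2D 1 x t := by
  simp [hermite2D]

theorem mul_hermite2D_succ (k : ℕ) (x t : ℝ) :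
    x * hermite2D (k + 1) x t = (k + 2) * hermite2D (k + 2) x t + t * hermite2D k x t := by
  rw [hermite2D]
  field_simp
  ring

noncomputable def hermiteMonomialSpan (m : ℕ) : Submodule ℝ (ℝ × ℝ → ℝ) :=
  Submodule.span ℝ {f | ∃ j k : ℕ, k ≤ m ∧ f = fun p : ℝ × ℝ => p.2 ^ j * hermite2D k p.1 p.2}

theorem monomial_hermite_mem_hermiteMonomialSpan {j k m : ℕ} (hk : k ≤ m) :
    (fun p : ℝ × ℝ => p.2 ^ j * hermite2D k p.1 p.2) ∈ hermiteMonomialSpan m :=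
  Submodule.subset_span ⟨j, k, hk, rfl⟩

theorem fst_mul_monomial_hermite_mem_hermiteMonomialSpan_succ {j k m : ℕ} (hk : k ≤ m) :
    Prod.fst * (fun p : ℝ × ℝ => p.2 ^ j * hermite2D k p.1 p.2) ∈
      hermiteMonomialSpan (m + 1) := by
  rcases k with _ | k
  · have hrec : Prod.fst * (fun p : ℝ × ℝ => p.2 ^ j * hermite2D 0 p.1 p.2) =
        fun p : ℝ × ℝ => p.2 ^ j * hermite2D 1 p.1 p.2 := by
      ext p
      simp only [Pi.mul_apply]
      linear_combination p.2 ^ j * mul_hermite2D_zero p.1 p.2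
    rw [hrec]
    exact monomial_hermite_mem_hermiteMonomialSpan (by omega)
  · have hrec : Prod.fst * (fun p : ℝ × ℝ => p.2 ^ j * hermite2D (k + 1) p.1 p.2) =
        ((k : ℝ) + 2) • (fun p : ℝ × ℝ => p.2 ^ j * hermite2D (k + 2) p.1 p.2) +
          fun p : ℝ × ℝ => p.2 ^ (j + 1) * hermite2D k p.1 p.2 := by
      ext p
      simp only [Pi.mul_apply, Pi.add_apply, Pi.smul_apply, smul_eq_mul]
      linear_combination p.2 ^ j * mul_hermite2D_succ k p.1 p.2
    rw [hrec]
    exact add_mem (Submodule.smul_mem _ _ (monomial_hermite_mem_hermiteMonomialSpan (by omega)))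
      (monomial_hermite_mem_hermiteMonomialSpan (by omega))

theorem fst_mul_mem_hermiteMonomialSpan_succ {m : ℕ} {f : ℝ × ℝ → ℝ}
    (hf : f ∈ hermiteMonomialSpan m) : Prod.fst * f ∈ hermiteMonomialSpan (m + 1) := by
  suffices hermiteMonomialSpan m ≤
      (hermiteMonomialSpan (m + 1)).comap (LinearMap.mulLeft ℝ Prod.fst) from this hf
  refine Submodule.span_le.mpr ?_
  rintro _ ⟨j, k, hk, rfl⟩
  exact fst_mul_monomial_hermite_mem_hermiteMonomialSpan_succ hk

theorem monomial_mem_hermiteMonomialSpan (n m : ℕ) :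
    (fun p : ℝ × ℝ => p.2 ^ n * p.1 ^ m) ∈ hermiteMonomialSpan m := by
  induction m with
  | zero =>
    simpa only [hermite2D, mul_one, pow_zero] using
      monomial_hermite_mem_hermiteMonomialSpan (j := n) (k := 0) le_rfl
  | succ m ih =>
    convert fst_mul_mem_hermiteMonomialSpan_succ ih using 1
    ext p
    simp only [Pi.mul_apply]
    ring

theorem mul_hermite2D_mem_span_of_mem_span {P : ℕ → ℕ → ℝ → ℝ} {g : ℝ → ℝ} {k m : ℕ}
    (hk : k ≤ m) (hg : g ∈ Submodule.span ℝ (Set.range fun i : ℕ => P i k)) :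
    (fun p : ℝ × ℝ => g p.2 * hermite2D k p.1 p.2) ∈
      Submodule.span ℝ {f : ℝ × ℝ → ℝ | ∃ i k : ℕ, k ≤ m ∧
        f = fun p : ℝ × ℝ => P i k p.2 * hermite2D k p.1 p.2} := by
  let mulH : (ℝ → ℝ) →ₗ[ℝ] ℝ × ℝ → ℝ :=
    LinearMap.mulRight ℝ (fun p : ℝ × ℝ => hermite2D k p.1 p.2) ∘ₗ LinearMap.funLeft ℝ ℝ Prod.snd
  refine Submodule.span_mono ?_ (Submodule.apply_mem_span_image_of_mem_span mulH hg)
  rintro _ ⟨_, ⟨i, rfl⟩, rfl⟩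
  exact ⟨i, k, hk, rfl⟩

/-- Every monomial `t^n·x^m` lies in the linear span of the products
`{P_{i,k}(t)·H_k(x,t) : i ≥ 0, 0 ≤ k ≤ m}`, where for each `k` the family
`{P_{i,k}}_{i≥0}` spans all polynomials in `t`.  (Functions of `(x,t) ∈ ℝ × ℝ`.) -/
theorem monomials_in_span_of_hermite_products
    (P : ℕ → ℕ → ℝ → ℝ)
    (hP : ∀ k j : ℕ, (fun t : ℝ => t ^ j) ∈
      Submodule.span ℝ (Set.range (fun i : ℕ => P i k))) :
    ∀ n m : ℕ, (fun p : ℝ × ℝ => p.2 ^ n * p.1 ^ m) ∈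
      Submodule.span ℝ {f : ℝ × ℝ → ℝ | ∃ i k : ℕ, k ≤ m ∧
        f = fun p : ℝ × ℝ => P i k p.2 * hermite2D k p.1 p.2} := by
  intro n m
  refine Submodule.span_le.mpr ?_ (monomial_mem_hermiteMonomialSpan n m)
  rintro _ ⟨j, k, hk, rfl⟩
  exact mul_hermite2D_mem_span_of_mem_span hk (hP k j)
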